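/- arXiv:2509.24018 — 2 statements merged into one kernel-verified Lean document; each statement's English description precedes it below -/
import Mathlib

section
/- Let V = V₁ ⊕ ⋯ ⊕ V_k be a direct sum decomposition of a finite-dimensional vector space over a field F, and let g ∈ GL(V) permute the subspaces V₁, …, V_k transitively (so g(V_i) = V_{σ(i)} for a k-cycle σ). Then the degree of the minimal polynomial of g equals k times the degree of the minimal polynomial of g^k restricted to V₁. -/
/-!
Let `m` be the minimal polynomial of `g ^ k` on `W i₀`. Since `m(g ^ k)` kills `W i₀` and commutes
with `g`, it kills every `W (σ ^ n i₀) = g ^ n (W i₀)`, so the minimal polynomial of `g` divides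
`m(X ^ k)`. Conversely, write a polynomial `q` with `q(g) = 0` as `∑_{j < k} X ^ j r_j(X ^ k)`.
Applied to `v ∈ W i₀`, the `j`-th term lies in `W (σ ^ j i₀)`; these `k` summands are independent,
so each `r_j(g ^ k)` kills `W i₀`, i.e. `m ∣ r_j`, and hence `m(X ^ k) ∣ q`.
Thus the minimal polynomial of `g` is `m(X ^ k)`.
-/

open Polynomial Function

theorem Polynomial.exists_eq_sum_X_pow_mul_expand {R : Type*} [CommSemiring R] {k : ℕ}
    (hk : 0 < k) (p : R[X]) :
    ∃ r : Fin k → R[X], p = ∑ j : Fin k, X ^ (j : ℕ) * expand R k (r j) := by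
  induction p using Polynomial.induction_on' with
  | add p q hp hq =>
    obtain ⟨r, rfl⟩ := hp
    obtain ⟨s, rfl⟩ := hq
    exact ⟨r + s, by simp only [Pi.add_apply, map_add, mul_add, Finset.sum_add_distrib]⟩
  | monomial n a =>
    let j₀ : Fin k := ⟨n % k, Nat.mod_lt n hk⟩
    refine ⟨Pi.single j₀ (monomial (n / k) a), ?_⟩
    rw [Fintype.sum_eq_single j₀ fun j hj => by rw [Pi.single_eq_of_ne hj, map_zero, mul_zero],
      Pi.single_eq_same, expand_monomial, X_pow_mul_monomial, Nat.div_add_mod']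

theorem Equiv.Perm.injective_pow_apply_of_surjective {k : ℕ} {σ : Perm (Fin k)} {x : Fin k}
    (h : Surjective fun n : ℕ => (σ ^ n) x) : Injective fun j : Fin k => (σ ^ (j : ℕ)) x := by
  have hper : 0 < minimalPeriod σ x :=
    minimalPeriod_pos_of_mem_periodicPts (σ.injective.mem_periodicPts x)
  have hk : k ≤ minimalPeriod σ x := by
    simpa using Fintype.card_le_of_surjective
      (fun j : Fin (minimalPeriod σ x) => (σ ^ (j : ℕ)) x) fun y => by
        obtain ⟨n, rfl⟩ := h y
        exact ⟨⟨n % minimalPeriod σ x, Nat.mod_lt n hper⟩, iterate_mod_minimalPeriod_eq⟩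
  intro a b hab
  exact Fin.ext (iterate_injOn_Iio_minimalPeriod (a.2.trans_le hk) (b.2.trans_le hk) hab)

theorem Module.End.aeval_restrict_apply {R M : Type*} [CommSemiring R] [AddCommMonoid M]
    [Module R M] (f : Module.End R M) {p : Submodule R M} (hf : ∀ x ∈ p, f x ∈ p) (q : R[X])
    (x : p) : (aeval (f.restrict hf) q x : M) = aeval f q x := by
  induction q using Polynomial.induction_on' with
  | add a b ha hb => simp [ha, hb]
  | monomial n a => simp [aeval_monomial, Module.End.pow_restrict n hf]

theorem Submodule.map_pow_eq_of_map_eq {R M ι : Type*} [Semiring R] [AddCommMonoid M]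
    [Module R M] {W : ι → Submodule R M} {f : Module.End R M} {σ : Equiv.Perm ι}
    (hmap : ∀ i, (W i).map f = W (σ i)) (n : ℕ) (i : ι) :
    (W i).map (f ^ n) = W ((σ ^ n) i) := by
  induction n with
  | zero => simp [Module.End.one_eq_id]
  | succ n ih =>
    rw [pow_succ', Module.End.mul_eq_comp, Submodule.map_comp, ih, hmap, pow_succ',
      Equiv.Perm.mul_apply]

section PermutedSummands

variable {F V ι : Type*} [Field F] [AddCommGroup V] [Module F V] {W : ι → Submodule F V}
  {f : Module.End F V} {σ : Equiv.Perm ι} {i₀ : ι} {k : ℕ}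

theorem aeval_expand_minpoly_restrict_eq_zero (hW : iSup W = ⊤)
    (hmap : ∀ i, (W i).map f = W (σ i)) (htrans : ∀ i, ∃ n : ℕ, (σ ^ n) i₀ = i)
    (hstab : ∀ x ∈ W i₀, (f ^ k) x ∈ W i₀) :
    aeval f (expand F k (minpoly F ((f ^ k).restrict hstab))) = 0 := by
  set P := expand F k (minpoly F ((f ^ k).restrict hstab))
  have hP : ∀ w ∈ W i₀, aeval f P w = 0 := fun w hw => by
    rw [expand_aeval, ← Module.End.aeval_restrict_apply _ hstab _ ⟨w, hw⟩, minpoly.aeval]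
    rfl
  rw [← LinearMap.ker_eq_top, eq_top_iff, ← hW, iSup_le_iff]
  intro i
  obtain ⟨n, rfl⟩ := htrans i
  rw [← Submodule.map_pow_eq_of_map_eq hmap, Submodule.map_le_iff_le_comap]
  intro w hw
  have hcomm : aeval f P * f ^ n = f ^ n * aeval f P := by
    simpa only [map_mul, aeval_X_pow] using congrArg (aeval f) (mul_comm P (X ^ n))
  rw [Submodule.mem_comap, LinearMap.mem_ker, ← Module.End.mul_apply, hcomm,
    Module.End.mul_apply, hP w hw, map_zero]

theorem aeval_restrict_eq_zero_of_aeval_sum_eq_zero (hind : iSupIndep W) (hf : Injective f)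
    (hmap : ∀ i, (W i).map f = W (σ i)) (hinj : Injective fun j : Fin k => (σ ^ (j : ℕ)) i₀)
    (hstab : ∀ x ∈ W i₀, (f ^ k) x ∈ W i₀) {r : Fin k → F[X]}
    (h : aeval f (∑ j : Fin k, X ^ (j : ℕ) * expand F k (r j)) = 0) (j : Fin k) :
    aeval ((f ^ k).restrict hstab) (r j) = 0 := by
  ext ⟨v, hv⟩
  set y : Fin k → V := fun j => (f ^ (j : ℕ)) (aeval (f ^ k) (r j) v)
  have hy_mem : ∀ j : Fin k, y j ∈ W ((σ ^ (j : ℕ)) i₀) := fun j => by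
    rw [← Submodule.map_pow_eq_of_map_eq hmap]
    refine Submodule.mem_map_of_mem ?_
    rw [← Module.End.aeval_restrict_apply _ hstab _ ⟨v, hv⟩]
    exact Subtype.prop _
  have hy_sum : ∑ j, y j = 0 := by
    simpa [y, map_sum, map_mul, expand_aeval] using congrArg (· v) h
  have hy : y j = 0 := (iSupIndep_iff_finsetSum_eq_zero_imp_eq_zero _).mp (hind.comp hinj)
    Finset.univ y (fun j _ => hy_mem j) hy_sum j (Finset.mem_univ j)
  rw [Module.End.aeval_restrict_apply]
  exact (hf.iterate j) (by simpa [y, Module.End.coe_pow] using hy)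

theorem expand_minpoly_restrict_dvd (hind : iSupIndep W) (hf : Injective f)
    (hmap : ∀ i, (W i).map f = W (σ i)) (hk : 0 < k)
    (hinj : Injective fun j : Fin k => (σ ^ (j : ℕ)) i₀)
    (hstab : ∀ x ∈ W i₀, (f ^ k) x ∈ W i₀) {q : F[X]} (hq : aeval f q = 0) :
    expand F k (minpoly F ((f ^ k).restrict hstab)) ∣ q := by
  obtain ⟨r, rfl⟩ := exists_eq_sum_X_pow_mul_expand hk q
  refine Finset.dvd_sum fun j _ => Dvd.dvd.mul_left (map_dvd _ (minpoly.dvd _ _ ?_)) _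
  exact aeval_restrict_eq_zero_of_aeval_sum_eq_zero hind hf hmap hinj hstab hq j

theorem minpoly_eq_expand_minpoly_pow_restrict [DecidableEq ι] [FiniteDimensional F V]
    (hW : DirectSum.IsInternal W) (hf : Injective f) (hmap : ∀ i, (W i).map f = W (σ i))
    (hk : 0 < k) (htrans : ∀ i, ∃ n : ℕ, (σ ^ n) i₀ = i)
    (hinj : Injective fun j : Fin k => (σ ^ (j : ℕ)) i₀)
    (hstab : ∀ x ∈ W i₀, (f ^ k) x ∈ W i₀) :
    minpoly F f = expand F k (minpoly F ((f ^ k).restrict hstab)) := by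
  refine eq_of_monic_of_associated (minpoly.monic (LinearMap.isIntegral f))
    ((monic_expand_iff hk).mpr (minpoly.monic (LinearMap.isIntegral _)))
    (associated_of_dvd_dvd ?_ ?_)
  · exact minpoly.dvd F f
      (aeval_expand_minpoly_restrict_eq_zero hW.submodule_iSup_eq_top hmap htrans hstab)
  · exact expand_minpoly_restrict_dvd hW.submodule_iSupIndep hf hmap hk hinj hstab
      (minpoly.aeval F f)

end PermutedSummands

theorem stmt_4_general (F : Type*) [Field F] (V : Type*) [AddCommGroup V] [Module F V]
    [FiniteDimensional F V] (k : ℕ) (W : Fin k → Submodule F V)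
    (hW : DirectSum.IsInternal W)
    (g : V ≃ₗ[F] V) (σ : Equiv.Perm (Fin k))
    (htrans : ∀ i j : Fin k, ∃ n : ℕ, (σ ^ n) i = j)
    (hmap : ∀ i, Submodule.map (g : V →ₗ[F] V) (W i) = W (σ i))
    (i0 : Fin k)
    (hstab : ∀ x ∈ W i0, ((g : V →ₗ[F] V) ^ k) x ∈ W i0) :
    (minpoly F (g : V →ₗ[F] V)).natDegree =
      k * (minpoly F (((g : V →ₗ[F] V) ^ k).restrict hstab)).natDegree := by
  rw [minpoly_eq_expand_minpoly_pow_restrict hW g.injective hmap i0.pos (htrans i0)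
    (Equiv.Perm.injective_pow_apply_of_surjective (htrans i0)) hstab, natDegree_expand, mul_comm]

/-- If `V = V₁ ⊕ ⋯ ⊕ V_k` and `g ∈ GL(V)` permutes the (nonzero) summands
transitively via a `k`-cycle `σ`, then the degree of the minimal polynomial of `g`
is `k` times the degree of the minimal polynomial of `g^k` restricted to a summand. -/
theorem stmt_4 (F : Type*) [Field F] (V : Type*) [AddCommGroup V] [Module F V]
    [FiniteDimensional F V] (k : ℕ) (hk : 0 < k) (W : Fin k → Submodule F V)
    (hW : DirectSum.IsInternal W) (hne : ∀ i, W i ≠ ⊥)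
    (g : V ≃ₗ[F] V) (σ : Equiv.Perm (Fin k)) (hcycle : σ.IsCycle)
    (htrans : ∀ i j : Fin k, ∃ n : ℕ, (σ ^ n) i = j)
    (hmap : ∀ i, Submodule.map (g : V →ₗ[F] V) (W i) = W (σ i))
    (i0 : Fin k)
    (hstab : ∀ x ∈ W i0, ((g : V →ₗ[F] V) ^ k) x ∈ W i0) :
    (minpoly F (g : V →ₗ[F] V)).natDegree =
      k * (minpoly F (((g : V →ₗ[F] V) ^ k).restrict hstab)).natDegree :=
  stmt_4_general F V k W hW g σ htrans hmap i0 hstab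
end

section
/- Let p and r be odd primes with r ≡ 1 (mod p). Then the semidirect product G = F_r ⋊ C_p (with C_p acting via a subgroup of order p of F_r^×) has the property that its only complex irreducible representation in which every element has eigenvalue 1 is the trivial representation; equivalently, every nontrivial irreducible complex representation of G contains some element without eigenvalue 1. -/
/-- Additive automorphisms of `A` give multiplicative automorphisms of
`Multiplicative A`, as a monoid homomorphism. -/
def addAutToMulAut (A : Type*) [AddGroup A] : Multiplicative (AddAut A) →* MulAut (Multiplicative A) where
  toFun f := AddEquiv.toMultiplicative f.toAdd
  map_one' := rfl
  map_mul' _ _ := rfl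

/-- The action of a subgroup `H ⊆ (ZMod r)ˣ` on `Multiplicative (ZMod r)` by
multiplication. -/
def unitsAction (r : ℕ) (H : Subgroup (ZMod r)ˣ) :
    H →* MulAut (Multiplicative (ZMod r)) :=
  (addAutToMulAut (ZMod r)).comp
    ((DistribMulAction.toAddAut (ZMod r)ˣ (ZMod r)).comp H.subtype)

/-- Let `p, r` be odd primes with `r ≡ 1 (mod p)`, and let
`G = F_r ⋊ C_p` where `C_p = H` is a subgroup of order `p` of `F_r^×` acting by
multiplication.  Then every nontrivial irreducible complex representation of `G`
contains an element without eigenvalue `1`. -/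
theorem stmt_11 (r p : ℕ) (hr : r.Prime) (hp : p.Prime) (hr2 : r ≠ 2) (hp2 : p ≠ 2)
    (hmod : r % p = 1 % p)
    (H : Subgroup (ZMod r)ˣ) (hH : Nat.card H = p)
    (V : Type*) [AddCommGroup V] [Module ℂ V] [FiniteDimensional ℂ V]
    (ρ : Representation ℂ (Multiplicative (ZMod r) ⋊[unitsAction r H] H) V)
    (hirr : ∀ U : Submodule ℂ V,
      (∀ x ∈ U, ∀ y : Multiplicative (ZMod r) ⋊[unitsAction r H] H, ρ y x ∈ U) →
        U = ⊥ ∨ U = ⊤)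
    (hnontriv : ∃ y : Multiplicative (ZMod r) ⋊[unitsAction r H] H, ρ y ≠ 1) :
    ∃ y : Multiplicative (ZMod r) ⋊[unitsAction r H] H,
      ¬ Module.End.HasEigenvalue (ρ y) 1 := by
  classical
  haveI : NeZero r := ⟨hr.ne_zero⟩
  -- the fixed space of the normal subgroup A
  let W : Submodule ℂ V :=
  { carrier := {v | ∀ x : Multiplicative (ZMod r), ρ (SemidirectProduct.inl x) v = v}
    add_mem' := fun {a b} ha hb x => by simp [map_add, ha x, hb x]
    zero_mem' := fun x => map_zero _
    smul_mem' := fun c v hv x => by simp [map_smul, hv x] }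
  have memW : ∀ v : V, v ∈ W ↔ ∀ x : Multiplicative (ZMod r),
      ρ (SemidirectProduct.inl x) v = v := fun v => Iff.rfl
  have hWinv : ∀ v ∈ W, ∀ g : Multiplicative (ZMod r) ⋊[unitsAction r H] H, ρ g v ∈ W := by
    intro v hv g
    rw [memW]
    intro x
    have hconj : SemidirectProduct.inl x * g
        = g * SemidirectProduct.inl ((unitsAction r H g.right)⁻¹ x) := by
      refine SemidirectProduct.ext ?_ ?_
      · show x * unitsAction r H 1 g.left
            = g.left * unitsAction r H g.right ((unitsAction r H g.right)⁻¹ x)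
        rw [map_one, MulAut.one_apply, MulAut.apply_inv_self, mul_comm]
      · show (1 : H) * g.right = g.right * 1
        rw [one_mul, mul_one]

    have h2 := congrArg (fun m : Multiplicative (ZMod r) ⋊[unitsAction r H] H => ρ m v) hconj
    simp only [map_mul, Module.End.mul_apply] at h2
    rw [h2, hv ((unitsAction r H g.right)⁻¹ x)]
  rcases hirr W hWinv with hbot | htop
  · -- A acts without nonzero fixed vectors; use a generator of A
    refine ⟨SemidirectProduct.inl (Multiplicative.ofAdd (1 : ZMod r)), ?_⟩
    intro h1
    apply h1
    rw [eq_bot_iff, ← hbot]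
    intro v hv
    rw [Module.End.mem_eigenspace_iff, one_smul] at hv
    rw [memW]
    intro x
    have hpow : ∀ n : ℕ,
        (ρ (SemidirectProduct.inl (Multiplicative.ofAdd (1 : ZMod r))) ^ n) v = v := by
      intro n
      induction n with
      | zero => rfl
      | succ n ih => rw [pow_succ, Module.End.mul_apply, hv, ih]
    have hx : x = (Multiplicative.ofAdd (1 : ZMod r)) ^ (Multiplicative.toAdd x).val := by
      apply Multiplicative.toAdd.injective
      rw [toAdd_pow, toAdd_ofAdd, nsmul_eq_mul, mul_one, ZMod.natCast_zmod_val]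
    rw [hx, map_pow, map_pow, hpow]
  · -- A acts trivially
    have hA : ∀ x : Multiplicative (ZMod r), ρ (SemidirectProduct.inl x) = 1 := by
      intro x
      ext v
      have : v ∈ W := htop ▸ Submodule.mem_top
      exact this x
    have hfact : ∀ g : Multiplicative (ZMod r) ⋊[unitsAction r H] H, ρ g = ρ (SemidirectProduct.inr g.right) := by
      intro g
      conv_lhs => rw [← SemidirectProduct.inl_left_mul_inr_right g]
      rw [map_mul, hA, one_mul]
    obtain ⟨y, hy⟩ := hnontriv
    set T : Module.End ℂ V := ρ (SemidirectProduct.inr y.right) with hT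
    have hTne : T ≠ 1 := by rw [hT, ← hfact]; exact hy
    -- V is nontrivial
    have : ∃ v : V, T v ≠ v := by
      by_contra h
      push_neg at h
      exact hTne (LinearMap.ext fun v => h v)
    obtain ⟨v₀, hv₀⟩ := this
    haveI : Nontrivial V := by
      refine ⟨v₀, 0, ?_⟩
      rintro rfl
      exact hv₀ (map_zero _)
    obtain ⟨ζ, hζ⟩ := Module.End.exists_eigenvalue T
    -- the ζ-eigenspace is invariant since everything commutes
    have hcomm : ∀ g : Multiplicative (ZMod r) ⋊[unitsAction r H] H, ρ g * T = T * ρ g := by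
      intro g
      rw [hfact g, hT, ← map_mul, ← map_mul, ← map_mul, ← map_mul, mul_comm]
    have hinv : ∀ v ∈ Module.End.eigenspace T ζ, ∀ g : Multiplicative (ZMod r) ⋊[unitsAction r H] H,
        ρ g v ∈ Module.End.eigenspace T ζ := by
      intro v hv g
      rw [Module.End.mem_eigenspace_iff] at hv ⊢
      have := congrArg (fun f : Module.End ℂ V => f v) (hcomm g)
      simp only [Module.End.mul_apply] at this
      rw [← this, hv, map_smul]
    rcases hirr _ hinv with hb | ht
    · exact absurd hb hζ
    · -- T is the scalar ζ
      have hscal : ∀ v : V, T v = ζ • v := by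
        intro v
        have : v ∈ Module.End.eigenspace T ζ := ht ▸ Submodule.mem_top
        exact Module.End.mem_eigenspace_iff.mp this
      have hζne : ζ ≠ 1 := by
        rintro rfl
        exact hTne (LinearMap.ext fun v => by rw [hscal v, one_smul]; rfl)
      refine ⟨SemidirectProduct.inr y.right, ?_⟩
      rw [Module.End.hasEigenvalue_iff]
      push_neg
      rw [eq_bot_iff]
      intro v hv
      rw [Module.End.mem_eigenspace_iff, one_smul] at hv
      have : ζ • v = v := by rw [← hscal v]; exact hv
      have hv0 : (ζ - 1) • v = 0 := by rw [sub_smul, one_smul, this, sub_self]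
      rw [Submodule.mem_bot]
      exact (smul_eq_zero.mp hv0).resolve_left (sub_ne_zero.mpr hζne)
end
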